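/- Every binary 1-balanced infinite word w has the property that any two 2-binomially equivalent factors of w are equal; equivalently, the 2-binomial complexity of w coincides with its subword complexity. -/

import Mathlib

/-- Number of occurrences of `x` as a scattered subword of `w`. -/
def binom {α : Type*} [DecidableEq α] (w x : List α) : ℕ := w.sublists.count x

/-- `k`-binomial equivalence of finite words. -/
def KBinEquiv {α : Type*} [DecidableEq α] (k : ℕ) (u v : List α) : Prop :=
  ∀ x : List α, x.length ≤ k → binom u x = binom v x

/-- `u` is a factor (finite contiguous subword) of the infinite word `w`. -/
def Factor {α : Type*} (w : ℕ → α) (u : List α) : Prop :=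
  ∃ s : ℕ, u = (List.range u.length).map (fun t => w (s + t))

/-!
A `2`-binomial class fixes the letter counts of a word, hence its length, and, for every letter `a`,
the sum of the prefix counts `|u[:m]|ₐ` over `m < |u|`, because that sum counts the scattered
subwords `ab`. For factors `u`, `v` of equal length of a balanced word, the discrepancy
`d m = |u[:m]|ₐ - |v[:m]|ₐ` satisfies `|d j - d i| ≤ 1`, so `d` cannot take both signs; as its sum
vanishes, `d = 0`, and words with the same prefix counts are equal.
-/

open List

section Binom

variable {α : Type*} [DecidableEq α]

lemma binom_eq_count_sublists' (w x : List α) : binom w x = w.sublists'.count x :=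
  (sublists_perm_sublists' w).count_eq x

@[simp]
lemma binom_nil_right (w : List α) : binom w [] = 1 := by
  induction w with
  | nil => rfl
  | cons c t ih =>
    rw [binom_eq_count_sublists'] at ih ⊢
    rw [sublists'_cons, count_append, ih, count_eq_zero.mpr (by simp)]

@[simp]
lemma binom_nil_cons (a : α) (x : List α) : binom [] (a :: x) = 0 := by
  simp [binom]

lemma binom_cons_cons (c : α) (t : List α) (a : α) (x : List α) :
    binom (c :: t) (a :: x) = binom t (a :: x) + if a = c then binom t x else 0 := by
  rw [binom_eq_count_sublists', binom_eq_count_sublists', binom_eq_count_sublists',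
    sublists'_cons, count_append]
  congr 1
  split_ifs with h
  · subst h
    exact count_map_of_injective _ _ cons_injective x
  · simp [count_eq_zero, Ne.symm h]

@[simp]
lemma binom_singleton (w : List α) (a : α) : binom w [a] = w.count a := by
  induction w with
  | nil => rfl
  | cons c t ih =>
    rw [binom_cons_cons, ih, count_cons, binom_nil_right]
    by_cases h : a = c <;> simp [h, Ne.symm]

lemma KBinEquiv.count_eq {k : ℕ} {u v : List α} (h : KBinEquiv k u v) (hk : 1 ≤ k) (a : α) :
    u.count a = v.count a := by
  simpa using h [a] (by simpa using hk)

end Binom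

section PrefixCounts

variable {α : Type*} [DecidableEq α]

lemma sum_count_eq_length [Fintype α] (u : List α) : ∑ b, u.count b = u.length := by
  simpa using Multiset.sum_count_eq_card (s := Finset.univ) (m := (u : Multiset α)) (by simp)

/-- Each occurrence of `a` at position `i` is counted by the prefixes of length `i + 1, …, |u| - 1`,
that is, once for every letter following it. -/
lemma sum_count_take_eq_sum_binom [Fintype α] (u : List α) (a : α) :
    ∑ m ∈ Finset.range u.length, (u.take m).count a = ∑ b, binom u [a, b] := by
  induction u with
  | nil => simp
  | cons c t ih =>
    simp only [length_cons, Finset.sum_range_succ', take_succ_cons, take_zero, count_nil,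
      add_zero, count_cons, Finset.sum_add_distrib, ih, binom_cons_cons, binom_singleton]
    by_cases h : a = c
    · simp [h, sum_count_eq_length, add_comm]
    · simp [h, Ne.symm h]

lemma count_take_add_count_drop_take (u : List α) (a : α) {i j : ℕ} (hij : i ≤ j) :
    (u.take i).count a + ((u.take j).drop i).count a = (u.take j).count a := by
  conv_rhs => rw [← take_append_drop i (u.take j), take_take, min_eq_left hij]
  rw [count_append]

lemma eq_of_count_take_eq {u v : List α} (hlen : u.length = v.length)
    (h : ∀ m ≤ u.length, ∀ a, (u.take m).count a = (v.take m).count a) : u = v := by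
  refine ext_getElem hlen fun i hu hv => ?_
  have := h (i + 1) hu u[i]
  rw [take_succ_eq_append_getElem hu, take_succ_eq_append_getElem hv, count_append, count_append,
    h i hu.le] at this
  by_contra hne
  simp [Ne.symm hne] at this

end PrefixCounts

section Balanced

variable {α : Type*} {w : ℕ → α} {u v : List α}

lemma factor_iff : Factor w u ↔ ∃ s, ∀ i (hi : i < u.length), u[i] = w (s + i) :=
  exists_congr fun s => by simp [ext_getElem_iff]

lemma Factor.take (h : Factor w u) (m : ℕ) : Factor w (u.take m) := by
  obtain ⟨s, hs⟩ := factor_iff.mp h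
  exact factor_iff.mpr ⟨s, fun i hi => by simpa using hs i (by simp at hi; omega)⟩

lemma Factor.drop (h : Factor w u) (m : ℕ) : Factor w (u.drop m) := by
  obtain ⟨s, hs⟩ := factor_iff.mp h
  exact factor_iff.mpr ⟨s + m, fun i hi => by
    simpa [add_assoc, add_comm m] using hs (m + i) (by simp at hi; omega)⟩

variable [DecidableEq α]

def IsBalanced (w : ℕ → α) : Prop :=
  ∀ u v : List α, Factor w u → Factor w v → u.length = v.length →
    ∀ a : α, |(u.count a : ℤ) - (v.count a : ℤ)| ≤ 1

/-- The left-hand side is the discrepancy of the factors `u[i:j]` and `v[i:j]`. -/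
lemma IsBalanced.abs_sub_count_take_sub_le (hw : IsBalanced w) (hu : Factor w u) (hv : Factor w v)
    (hlen : u.length = v.length) (a : α) {i j : ℕ} (hij : i ≤ j) :
    |(((u.take j).count a : ℤ) - (v.take j).count a) - ((u.take i).count a - (v.take i).count a)|
      ≤ 1 := by
  have hfac := hw _ _ ((hu.take j).drop i) ((hv.take j).drop i) (by simp [hlen]) a
  rw [← count_take_add_count_drop_take u a hij, ← count_take_add_count_drop_take v a hij]
  push_cast
  convert hfac using 2
  ring

end Balanced

lemma Finset.eq_zero_of_sum_eq_zero_of_le_add_one {ι : Type*} {s : Finset ι} {f : ι → ℤ}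
    (hf : ∀ i ∈ s, ∀ j ∈ s, f i ≤ f j + 1) (hsum : ∑ i ∈ s, f i = 0) : ∀ i ∈ s, f i = 0 := by
  intro i hi
  rcases lt_trichotomy (f i) 0 with hneg | hzero | hpos
  · have : ∑ j ∈ s, f j < 0 :=
      Finset.sum_neg' (fun j hj => by linarith [hf j hj i hi]) ⟨i, hi, hneg⟩
    omega
  · exact hzero
  · have : 0 < ∑ j ∈ s, f j :=
      Finset.sum_pos' (fun j hj => by linarith [hf i hi j hj]) ⟨i, hi, hpos⟩
    omega

theorem IsBalanced.eq_of_kBinEquiv_two {α : Type*} [DecidableEq α] [Fintype α] {w : ℕ → α}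
    (hw : IsBalanced w) {u v : List α} (hu : Factor w u) (hv : Factor w v)
    (huv : KBinEquiv 2 u v) : u = v := by
  have hcount := huv.count_eq one_le_two
  have hlen : u.length = v.length := by
    rw [← sum_count_eq_length u, ← sum_count_eq_length v]
    simp only [hcount]
  refine eq_of_count_take_eq hlen fun m hm a => ?_
  set d : ℕ → ℤ := fun m => (u.take m).count a - (v.take m).count a with hd
  have hsum : ∑ m ∈ Finset.range u.length, d m = 0 := by
    have hbinom : ∀ b, binom u [a, b] = binom v [a, b] := fun b => huv [a, b] le_rfl
    simp only [hd, Finset.sum_sub_distrib, ← Nat.cast_sum]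
    rw [sum_count_take_eq_sum_binom, hlen, sum_count_take_eq_sum_binom]
    simp [hbinom]
  have hstep : ∀ i j, d i ≤ d j + 1 := by
    intro i j
    rcases le_total i j with hij | hij
    · linarith [(abs_le.mp (hw.abs_sub_count_take_sub_le hu hv hlen a hij)).1]
    · linarith [(abs_le.mp (hw.abs_sub_count_take_sub_le hu hv hlen a hij)).2]
  rcases hm.lt_or_eq with hm | hm
  · exact_mod_cast sub_eq_zero.mp <| Finset.eq_zero_of_sum_eq_zero_of_le_add_one
      (fun i _ j _ => hstep i j) hsum m (Finset.mem_range.mpr hm)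
  · rw [take_of_length_le hm.ge, take_of_length_le (hlen ▸ hm.ge), hcount]

theorem stmt_13 (w : ℕ → Fin 2)
    (hbal : ∀ u v : List (Fin 2), Factor w u → Factor w v → u.length = v.length →
      ∀ a : Fin 2, |(u.count a : ℤ) - (v.count a : ℤ)| ≤ 1) :
    ∀ u v : List (Fin 2), Factor w u → Factor w v → KBinEquiv 2 u v → u = v :=
  fun _ _ => IsBalanced.eq_of_kBinEquiv_two hbal
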